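/- Let μ > 1 and let (A_n) be nonnegative reals with A_n·(μ−1)/μ^{n+1} → 1 as n → ∞. Let f : ℕ → ℝ be nonnegative with S = Σ_{L≥0} f(L)·μ^{−L} finite and strictly positive. Then Σ_{L=0}^{D} f(L)·A_{D−L} is asymptotically equivalent to (μ^{D+1}/(μ−1))·S as D → ∞; that is, (μ−1)·μ^{−(D+1)}·Σ_{L=0}^{D} f(L)·A_{D−L} → S. -/

import Mathlib

/-!
Normalising by `μ^(D+1)/(μ-1)` turns the convolution into `∑_{L ≤ D} w L · g (D - L)` with
weights `w L = f L · μ⁻¹^L` and `g n = A n · (μ-1)/μ^(n+1) → 1`. Each term tends to `w L`, and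
since a convergent `g` is bounded the terms are dominated by `C · |w L|`, which is summable
because summability in `ℝ` is absolute; so Tannery's theorem gives the limit `∑' L, w L`.
-/

open Filter Topology Finset

theorem sum_range_succ_mul_sub_eq_tsum (w g : ℕ → ℝ) (D : ℕ) :
    ∑ L ∈ range (D + 1), w L * g (D - L) = ∑' L, if L ≤ D then w L * g (D - L) else 0 := by
  rw [tsum_eq_sum (s := range (D + 1)) fun L hL => if_neg (by simpa [Nat.lt_succ_iff] using hL)]
  exact sum_congr rfl fun L hL => (if_pos (Nat.lt_succ_iff.1 (mem_range.1 hL))).symm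

theorem tendsto_sum_range_mul_sub {w g : ℕ → ℝ} {c : ℝ} (hw : Summable w)
    (hg : Tendsto g atTop (𝓝 c)) :
    Tendsto (fun D => ∑ L ∈ range (D + 1), w L * g (D - L)) atTop (𝓝 ((∑' L, w L) * c)) := by
  obtain ⟨M, hM⟩ : ∃ M, ∀ n, ‖g n‖ ≤ M :=
    let ⟨M, hM⟩ := hg.norm.bddAbove_range
    ⟨M, fun n => hM ⟨n, rfl⟩⟩
  simp only [sum_range_succ_mul_sub_eq_tsum, ← tsum_mul_right]
  refine tendsto_tsum_of_dominated_convergence (bound := fun L => ‖w L‖ * M)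
    (hw.abs.mul_right M) (fun L => ?_) (Eventually.of_forall fun D L => ?_)
  · have hterm : Tendsto (fun D => w L * g (D - L)) atTop (𝓝 (w L * c)) :=
      (hg.comp (tendsto_sub_atTop_nat L)).const_mul (w L)
    refine hterm.congr' ?_
    filter_upwards [eventually_ge_atTop L] with D hD
    rw [if_pos hD]
  · split_ifs
    · rw [norm_mul]
      exact mul_le_mul_of_nonneg_left (hM _) (norm_nonneg _)
    · rw [norm_zero]
      exact mul_nonneg (norm_nonneg _) ((norm_nonneg _).trans (hM 0))

theorem div_pow_succ_mul_sum_range_mul_sub {μ : ℝ} (hμ : μ ≠ 0) (f A : ℕ → ℝ) (D : ℕ) :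
    (μ - 1) / μ ^ (D + 1) * ∑ L ∈ range (D + 1), f L * A (D - L)
      = ∑ L ∈ range (D + 1), f L * μ⁻¹ ^ L * (A (D - L) * (μ - 1) / μ ^ (D - L + 1)) := by
  rw [mul_sum]
  refine sum_congr rfl fun L hL => ?_
  have hLD : L ≤ D := Nat.lt_succ_iff.1 (mem_range.1 hL)
  have hsplit : μ ^ (D + 1) = μ ^ L * μ ^ (D - L + 1) := by
    rw [← pow_add]
    congr 1
    omega
  rw [hsplit, inv_pow]
  field_simp

theorem convolution_asymptotics_general (μ : ℝ) (hμ : 1 < μ)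
    (A : ℕ → ℝ)
    (hA : Tendsto (fun n => A n * (μ - 1) / μ ^ (n + 1)) atTop (𝓝 1))
    (f : ℕ → ℝ)
    (hS : Summable (fun L => f L * μ⁻¹ ^ L)) :
    Tendsto
      (fun D : ℕ =>
        (μ - 1) / μ ^ (D + 1) * ∑ L ∈ Finset.range (D + 1), f L * A (D - L))
      atTop (𝓝 (∑' (L : ℕ), f L * μ⁻¹ ^ L)) := by
  simp only [div_pow_succ_mul_sum_range_mul_sub (by positivity : μ ≠ 0)]
  simpa using tendsto_sum_range_mul_sub hS hA

/-- Convolution asymptotics: if `A_n (μ-1)/μ^{n+1} → 1` and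
`S = Σ_L f(L) μ^{-L}` is finite and positive, then
`(μ-1) μ^{-(D+1)} Σ_{L=0}^{D} f(L) A_{D-L} → S`. -/
theorem convolution_asymptotics (μ : ℝ) (hμ : 1 < μ)
    (A : ℕ → ℝ) (hA0 : ∀ n, 0 ≤ A n)
    (hA : Tendsto (fun n => A n * (μ - 1) / μ ^ (n + 1)) atTop (𝓝 1))
    (f : ℕ → ℝ) (hf0 : ∀ L, 0 ≤ f L)
    (hS : Summable (fun L => f L * μ⁻¹ ^ L))
    (hSpos : 0 < ∑' (L : ℕ), f L * μ⁻¹ ^ L) :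
    Tendsto
      (fun D : ℕ =>
        (μ - 1) / μ ^ (D + 1) * ∑ L ∈ Finset.range (D + 1), f L * A (D - L))
      atTop (𝓝 (∑' (L : ℕ), f L * μ⁻¹ ^ L)) :=
  convolution_asymptotics_general μ hμ A hA f hS
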